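/- arXiv:2602.01555 — 5 statements merged into one kernel-verified Lean document; each statement's English description precedes it below -/
import Mathlib

section
/- In the DivE framework with M = 2, assume every CN has degree at least 2. If for some iteration ℓ ≥ 1 the CN c_j is a generalized rootcheck for the VN v_i at iteration ℓ, then v_i attains full diversity at iteration ℓ; that is, F^ℓ_i(a) = a 0 || a 1 for every fading state a : Fin 2 → Bool. (This is Proposition 1 of the paper.) -/
namespace DivE

/-- VN→CN DivE message functions: `VtoC H π ℓ i j a` is `F^ℓ_{v i → c j}(a)`.
`F⁰_{v i → c j}(a) = a (π i)`; for `ℓ ≥ 1`,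
`F^ℓ_{v i → c j}(a) = a (π i) || OR_{j' ≠ j, H j' i} (AND_{u ≠ i, H j' u} F^{ℓ-1}_{v u → c j'}(a))`. -/
noncomputable def VtoC {M c n : ℕ} (H : Fin c → Fin n → Bool) (π : Fin n → Fin M) :
    ℕ → Fin n → Fin c → (Fin M → Bool) → Bool
  | 0, i, _, a => a (π i)
  | ℓ + 1, i, j, a =>
      a (π i) ||
        (Finset.univ.filter fun j' : Fin c => j' ≠ j ∧ H j' i = true).sup fun j' =>
          (Finset.univ.filter fun u : Fin n => u ≠ i ∧ H j' u = true).inf fun u =>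
            VtoC H π ℓ u j' a

/-- CN→VN DivE message functions: `CtoV H π ℓ j i a` is `F^ℓ_{c j → v i}(a)`, meaningful
for `ℓ ≥ 1`: the AND over all `u ≠ i` with `H j u = true` of `F^{ℓ-1}_{v u → c j}(a)`
(`true` if there is no such `u`). -/
noncomputable def CtoV {M c n : ℕ} (H : Fin c → Fin n → Bool) (π : Fin n → Fin M)
    (ℓ : ℕ) (j : Fin c) (i : Fin n) (a : Fin M → Bool) : Bool :=
  (Finset.univ.filter fun u : Fin n => u ≠ i ∧ H j u = true).inf fun u =>
    VtoC H π (ℓ - 1) u j a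

/-- A posteriori DivE function: `apost H π ℓ i a` is `F^ℓ_i(a)`, meaningful for `ℓ ≥ 1`:
`a (π i)` OR the OR over all `j` with `H j i = true` of `F^ℓ_{c j → v i}(a)`. -/
noncomputable def apost {M c n : ℕ} (H : Fin c → Fin n → Bool) (π : Fin n → Fin M)
    (ℓ : ℕ) (i : Fin n) (a : Fin M → Bool) : Bool :=
  a (π i) || (Finset.univ.filter fun j : Fin c => H j i = true).sup fun j => CtoV H π ℓ j i a

/-- The full-diversity Boolean fading function for `M = 2`. -/
def FD (a : Fin 2 → Bool) : Bool := a 0 || a 1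

/-- Every CN has degree at least 2. -/
def degTwo {c n : ℕ} (H : Fin c → Fin n → Bool) : Prop :=
  ∀ j : Fin c, ∃ i i' : Fin n, i ≠ i' ∧ H j i = true ∧ H j i' = true

/-- `c j` is a generalized rootcheck for `v i` at iteration `ℓ ≥ 1`:
`H j i = true` and there is a block `m'` distinct from `m := π i` such that every other
neighboring VN `u` of `c j` has message `F^{ℓ-1}_{v u → c j}` equal to `(a ↦ a m')` or to `FD`. -/
def GenRootcheck {c n : ℕ} (H : Fin c → Fin n → Bool) (π : Fin n → Fin 2)
    (ℓ : ℕ) (j : Fin c) (i : Fin n) : Prop :=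
  H j i = true ∧
    ∃ m' : Fin 2, m' ≠ π i ∧
      ∀ u : Fin n, u ≠ i → H j u = true →
        VtoC H π (ℓ - 1) u j = (fun a => a m') ∨ VtoC H π (ℓ - 1) u j = FD


lemma fin2_cases : ∀ x y z : Fin 2, y ≠ z → (x = y ∨ x = z) := by decide

lemma fd_key : ∀ (x y : Fin 2) (b : Fin 2 → Bool), y ≠ x → FD b = (b x || b y) := by decide

lemma vtoc_bot {c n : ℕ} (H : Fin c → Fin n → Bool) (π : Fin n → Fin 2) (hdeg : degTwo H) :
    ∀ ℓ (u : Fin n) (j : Fin c), VtoC H π ℓ u j (fun _ => false) = false := by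
  intro ℓ
  induction ℓ with
  | zero => intro u j; rfl
  | succ ℓ ih =>
    intro u j
    simp only [VtoC, Bool.false_or]
    refine le_bot_iff.mp (Finset.sup_le ?_)
    intro j' hj'
    obtain ⟨i1, i2, h12, hi1, hi2⟩ := hdeg j'
    have hex : ∃ w, w ≠ u ∧ H j' w = true := by
      by_cases h : i1 = u
      · refine ⟨i2, ?_, hi2⟩; subst h; exact fun he => h12 he.symm
      · exact ⟨i1, h, hi1⟩
    obtain ⟨w, hw, hw'⟩ := hex
    have hmem : w ∈ Finset.univ.filter fun v : Fin n => v ≠ u ∧ H j' v = true := by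
      simp [hw, hw']
    calc (Finset.univ.filter fun v : Fin n => v ≠ u ∧ H j' v = true).inf
            (fun v => VtoC H π ℓ v j' (fun _ => false))
        ≤ VtoC H π ℓ w j' (fun _ => false) := Finset.inf_le hmem
      _ = ⊥ := ih w j'

/-- Proposition 1: if `c j` is a generalized rootcheck for `v i` at iteration `ℓ ≥ 1`
and every CN has degree at least 2, then `v i` attains full diversity at iteration `ℓ`. -/
theorem gen_rootcheck_full_diversity {c n : ℕ} (H : Fin c → Fin n → Bool)
    (π : Fin n → Fin 2) (hdeg : degTwo H) (ℓ : ℕ) (hℓ : 1 ≤ ℓ) (j : Fin c) (i : Fin n)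
    (hgr : GenRootcheck H π ℓ j i) :
    ∀ a : Fin 2 → Bool, apost H π ℓ i a = FD a := by
  intro a
  obtain ⟨hji, m', hm', hall⟩ := hgr
  have hFD : FD a = (a (π i) || a m') := fd_key (π i) m' a hm'
  by_cases ha : a (π i) = true
  · simp [apost, ha, hFD]
  · simp only [Bool.not_eq_true] at ha
    by_cases hb : a m' = true
    · have hc : CtoV H π ℓ j i a = true := by
        rw [CtoV]
        refine top_unique (Finset.le_inf fun u hu => ?_)
        simp only [Finset.mem_filter] at hu
        rcases hall u hu.2.1 hu.2.2 with h | h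
        · rw [h]; exact le_of_eq hb.symm
        · rw [h]
          have : FD a = true := by rw [hFD, ha, hb]; rfl
          exact le_of_eq this.symm
      have hmem : j ∈ Finset.univ.filter fun j' : Fin c => H j' i = true := by simp [hji]
      have hsup : ((Finset.univ.filter fun j' : Fin c => H j' i = true).sup
          fun j' => CtoV H π ℓ j' i a) = true := by
        refine top_unique ?_
        calc (⊤ : Bool) = CtoV H π ℓ j i a := hc.symm
          _ ≤ _ := Finset.le_sup (f := fun j' => CtoV H π ℓ j' i a) hmem
      rw [apost, hsup, hFD, ha, hb]
    · simp only [Bool.not_eq_true] at hb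
      have haf : a = fun _ => false := by
        funext x
        rcases fin2_cases x (π i) m' (Ne.symm hm') with h | h
        · rw [h]; exact ha
        · rw [h]; exact hb
      subst haf
      have hfd0 : FD (fun _ => false) = false := rfl
      rw [hfd0, apost]
      simp only [Bool.false_or]
      refine le_bot_iff.mp (Finset.sup_le ?_)
      intro j' hj'
      rw [CtoV]
      obtain ⟨i1, i2, h12, hi1, hi2⟩ := hdeg j'
      have hex : ∃ w, w ≠ i ∧ H j' w = true := by
        by_cases h : i1 = i
        · refine ⟨i2, ?_, hi2⟩; subst h; exact fun he => h12 he.symm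
        · exact ⟨i1, h, hi1⟩
      obtain ⟨w, hw, hw'⟩ := hex
      have hmem : w ∈ Finset.univ.filter fun v : Fin n => v ≠ i ∧ H j' v = true := by
        simp [hw, hw']
      calc (Finset.univ.filter fun v : Fin n => v ≠ i ∧ H j' v = true).inf
              (fun v => VtoC H π (ℓ - 1) v j' (fun _ => false))
          ≤ VtoC H π (ℓ - 1) w j' (fun _ => false) := Finset.inf_le hmem
        _ = ⊥ := vtoc_bot H π hdeg _ w j'
end DivE
end

section
/- In the DivE framework with M = 2, assume every CN has degree at least 2, and let I ⊆ Fin n be a set of VNs (the information VNs). If for every i ∈ I there exist an iteration ℓ_i ≥ 1 and a CN j_i that is a generalized rootcheck for v_i at iteration ℓ_i, then there exists L such that for every i ∈ I and every ℓ ≥ L, F^ℓ_i = FD; that is, every information VN attains full diversity and retains it, so the code achieves full diversity. (This is Proposition 2 of the paper.) -/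
namespace DivE

lemma btrue_of_le {x y : Bool} (h : x ≤ y) (hx : x = true) : y = true := by
  subst hx
  cases y
  · exact absurd h (by decide)
  · rfl

lemma sup_true {α : Type*} (s : Finset α) (f : α → Bool) (h : s.sup f = true) :
    ∃ i ∈ s, f i = true := by
  by_contra hc
  push_neg at hc
  have : s.sup f = ⊥ := (Finset.sup_eq_bot_iff f s).mpr (by intro i hi; simpa using hc i hi)
  simp_all

lemma sup_true' {α : Type*} (s : Finset α) (f : α → Bool) {i : α} (hi : i ∈ s)
    (h : f i = true) : s.sup f = true :=
  btrue_of_le (Finset.le_sup hi) h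

lemma inf_true {α : Type*} (s : Finset α) (f : α → Bool) (h : ∀ i ∈ s, f i = true) :
    s.inf f = true := by
  have : s.inf f = ⊤ := (Finset.inf_eq_top_iff f s).mpr (by intro i hi; simpa using h i hi)
  simpa using this

lemma inf_true' {α : Type*} (s : Finset α) (f : α → Bool) (h : s.inf f = true)
    {i : α} (hi : i ∈ s) : f i = true :=
  btrue_of_le (Finset.inf_le hi) h

lemma fd_of_coord (a : Fin 2 → Bool) (m : Fin 2) (hm : a m = true) : FD a = true := by
  have : m = 0 ∨ m = 1 := by omega
  rcases this with h | h <;> subst h <;> simp [FD, hm]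

/-- Monotone in ℓ (single step). -/
lemma vtoC_mono_step {c n : ℕ} (H : Fin c → Fin n → Bool) (π : Fin n → Fin 2) :
    ∀ ℓ : ℕ, ∀ i j a, VtoC H π ℓ i j a = true → VtoC H π (ℓ + 1) i j a = true := by
  intro ℓ
  induction ℓ with
  | zero =>
    intro i j a hv
    simp only [VtoC] at hv ⊢
    simp [hv]
  | succ ℓ ih =>
    intro i j a hv
    simp only [VtoC] at hv ⊢
    rcases Bool.or_eq_true_iff.mp hv with hp | hs
    · simp [hp]
    · obtain ⟨j', hj'mem, hj'⟩ := sup_true _ _ hs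
      refine Bool.or_eq_true_iff.mpr (Or.inr (sup_true' _ _ hj'mem ?_))
      refine inf_true _ _ fun u hu => ?_
      exact ih u j' a (inf_true' _ _ hj' hu)

lemma vtoC_mono {c n : ℕ} (H : Fin c → Fin n → Bool) (π : Fin n → Fin 2)
    {ℓ ℓ' : ℕ} (hle : ℓ ≤ ℓ') (i : Fin n) (j : Fin c) (a : Fin 2 → Bool)
    (hv : VtoC H π ℓ i j a = true) : VtoC H π ℓ' i j a = true := by
  induction ℓ' with
  | zero =>
    have : ℓ = 0 := Nat.le_zero.mp hle
    subst this; exact hv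
  | succ m ih =>
    rcases Nat.lt_or_ge ℓ (m + 1) with hlt | hge
    · exact vtoC_mono_step H π m i j a (ih (by omega))
    · have : ℓ = m + 1 := by omega
      subst this; exact hv

/-- Any true message forces FD to be true (uses degree ≥ 2). -/
lemma vtoC_le_fd {c n : ℕ} (H : Fin c → Fin n → Bool) (π : Fin n → Fin 2)
    (hdeg : degTwo H) :
    ∀ ℓ : ℕ, ∀ i j a, VtoC H π ℓ i j a = true → FD a = true := by
  intro ℓ
  induction ℓ with
  | zero =>
    intro i j a hv
    simp only [VtoC] at hv
    exact fd_of_coord a (π i) hv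
  | succ ℓ ih =>
    intro i j a hv
    simp only [VtoC] at hv
    rcases Bool.or_eq_true_iff.mp hv with hp | hs
    · exact fd_of_coord a (π i) hp
    · obtain ⟨j', hj'mem, hj'⟩ := sup_true _ _ hs
      simp only [Finset.mem_filter, Finset.mem_univ, true_and] at hj'mem
      obtain ⟨i1, i2, hne, h1, h2⟩ := hdeg j'
      rcases eq_or_ne i1 i with rfl | hni
      · have hmem : i2 ∈ Finset.univ.filter fun u : Fin n => u ≠ i1 ∧ H j' u = true := by
          simp [Ne.symm hne, h2]
        exact ih i2 j' a (inf_true' _ _ hj' hmem)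
      · have hmem : i1 ∈ Finset.univ.filter fun u : Fin n => u ≠ i ∧ H j' u = true := by
          simp [hni, h1]
        exact ih i1 j' a (inf_true' _ _ hj' hmem)

lemma apost_le_fd {c n : ℕ} (H : Fin c → Fin n → Bool) (π : Fin n → Fin 2)
    (hdeg : degTwo H) (ℓ : ℕ) (i : Fin n) (a : Fin 2 → Bool)
    (h : apost H π ℓ i a = true) : FD a = true := by
  simp only [apost] at h
  rcases Bool.or_eq_true_iff.mp h with hp | hs
  · exact fd_of_coord a (π i) hp
  · obtain ⟨j, hjmem, hj⟩ := sup_true _ _ hs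
    simp only [CtoV] at hj
    obtain ⟨i1, i2, hne, h1, h2⟩ := hdeg j
    rcases eq_or_ne i1 i with rfl | hni
    · have hmem : i2 ∈ Finset.univ.filter fun u : Fin n => u ≠ i1 ∧ H j u = true := by
        simp [Ne.symm hne, h2]
      exact vtoC_le_fd H π hdeg _ i2 j a (inf_true' _ _ hj hmem)
    · have hmem : i1 ∈ Finset.univ.filter fun u : Fin n => u ≠ i ∧ H j u = true := by
        simp [hni, h1]
      exact vtoC_le_fd H π hdeg _ i1 j a (inf_true' _ _ hj hmem)

lemma apost_mono {c n : ℕ} (H : Fin c → Fin n → Bool) (π : Fin n → Fin 2)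
    {ℓ ℓ' : ℕ} (hle : ℓ ≤ ℓ') (i : Fin n) (a : Fin 2 → Bool)
    (h : apost H π ℓ i a = true) : apost H π ℓ' i a = true := by
  simp only [apost] at h ⊢
  rcases Bool.or_eq_true_iff.mp h with hp | hs
  · simp [hp]
  · obtain ⟨j, hjmem, hj⟩ := sup_true _ _ hs
    refine Bool.or_eq_true_iff.mpr (Or.inr (sup_true' _ _ hjmem ?_))
    simp only [CtoV] at hj ⊢
    refine inf_true _ _ fun u hu => ?_
    exact vtoC_mono H π (by omega) u j a (inf_true' _ _ hj hu)

/-- Generalized rootcheck gives apost = FD at the same iteration. -/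
lemma rootcheck_apost {c n : ℕ} (H : Fin c → Fin n → Bool) (π : Fin n → Fin 2)
    (hdeg : degTwo H) {ℓ : ℕ} {j : Fin c} {i : Fin n}
    (hrc : GenRootcheck H π ℓ j i) : apost H π ℓ i = FD := by
  obtain ⟨hji, m', hm', hall⟩ := hrc
  funext a
  cases hFD : FD a with
  | false =>
    cases hap : apost H π ℓ i a with
    | false => rfl
    | true => rw [apost_le_fd H π hdeg ℓ i a hap] at hFD; exact hFD
  | true =>
    cases hp : a (π i) with
    | true => simp [apost, hp]
    | false =>
      have hm'true : a m' = true := by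
        have h01 : ∀ x : Fin 2, x = 0 ∨ x = 1 := by decide
        rcases h01 m' with rfl | rfl <;> rcases h01 (π i) with hpi | hpi
        · exact absurd hpi.symm hm'
        · rw [hpi] at hp; simp [FD, hp] at hFD; exact hFD
        · rw [hpi] at hp; simp [FD, hp] at hFD; exact hFD
        · exact absurd hpi.symm hm'
      have hctov : CtoV H π ℓ j i a = true := by
        simp only [CtoV]
        refine inf_true _ _ fun u hu => ?_
        simp only [Finset.mem_filter, Finset.mem_univ, true_and] at hu
        rcases hall u hu.1 hu.2 with hv | hv
        · rw [hv]; exact hm'true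
        · rw [hv]; exact hFD
      have hjmem : j ∈ Finset.univ.filter fun j : Fin c => H j i = true := by simp [hji]
      simp only [apost]
      exact Bool.or_eq_true_iff.mpr (Or.inr (sup_true' _ _ hjmem hctov))

/-- Proposition 2: if every information VN `i ∈ I` is the root node of a generalized
rootcheck at some iteration `ℓ_i ≥ 1`, then there is an `L` such that every `i ∈ I`
has `F^ℓ_i = FD` for all `ℓ ≥ L`, i.e. the code achieves full diversity. -/
theorem all_gen_rootcheck_full_diversity {c n : ℕ} (H : Fin c → Fin n → Bool)
    (π : Fin n → Fin 2) (hdeg : degTwo H) (I : Set (Fin n))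
    (h : ∀ i ∈ I, ∃ ℓ : ℕ, 1 ≤ ℓ ∧ ∃ j : Fin c, GenRootcheck H π ℓ j i) :
    ∃ L : ℕ, ∀ i ∈ I, ∀ ℓ : ℕ, L ≤ ℓ → apost H π ℓ i = FD := by
  classical
  have key : ∀ i ∈ I, ∃ ℓi : ℕ, ∀ ℓ ≥ ℓi, apost H π ℓ i = FD := by
    intro i hi
    obtain ⟨ℓi, _, j, hrc⟩ := h i hi
    refine ⟨ℓi, fun ℓ hℓ => ?_⟩
    have hbase : apost H π ℓi i = FD := rootcheck_apost H π hdeg hrc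
    funext a
    cases hFD : FD a with
    | false =>
      cases hap : apost H π ℓ i a with
      | false => rfl
      | true => rw [apost_le_fd H π hdeg ℓ i a hap] at hFD; exact hFD
    | true =>
      have : apost H π ℓi i a = true := by rw [hbase]; exact hFD
      exact apost_mono H π hℓ i a this
  choose f hf using key
  refine ⟨(Finset.univ : Finset (Fin n)).sup
    (fun i => if hi : i ∈ I then f i hi else 0), fun i hi ℓ hℓ => ?_⟩
  have : f i hi ≤ ℓ := by
    refine le_trans ?_ hℓ
    have := Finset.le_sup (f := fun i => if hi : i ∈ I then f i hi else 0)
      (Finset.mem_univ i)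
    simpa [hi] using this
  exact hf i hi ℓ this

end DivE
end

section
/- In the DivE framework with M = 2, assume every CN has degree at least 2. Let L : ℕ, w : Fin L → Fin n (a sequence of VNs) and d : Fin L → Fin c (a sequence of CNs) satisfy H (d t) (w t) = true for every t, and suppose that for every t : Fin L and every u ≠ w t with H (d t) u = true, either π u ≠ π (w t), or there exists r < t with u = w r and d r ≠ d t. Then for every t : Fin L and every iteration ℓ ≥ t + 1 (indexing t from 0), F^ℓ_{w t} = FD. In particular, every VN in the range of w attains full diversity within at most L BP iterations and retains it thereafter. (This is the generalized-rootcheck propagation argument underlying Theorem 1 of the paper, which guarantees that every protograph in the proposed template family achieves full diversity within at most n/4 iterations.) -/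
namespace DivE

lemma vtoc_of_true {c n : ℕ} (H : Fin c → Fin n → Bool) (π : Fin n → Fin 2)
    (ℓ : ℕ) (i : Fin n) (j : Fin c) (a : Fin 2 → Bool) (h : a (π i) = true) :
    VtoC H π ℓ i j a = true := by
  cases ℓ <;> simp [VtoC, h]

lemma vtoc_false {c n : ℕ} (H : Fin c → Fin n → Bool) (π : Fin n → Fin 2)
    (hdeg : degTwo H) (a : Fin 2 → Bool) (ha : ∀ m, a m = false) :
    ∀ ℓ (i : Fin n) (j : Fin c), VtoC H π ℓ i j a = false := by
  intro ℓ
  induction ℓ with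
  | zero => intro i j; simp [VtoC, ha]
  | succ ℓ ih =>
    intro i j
    simp only [VtoC, ha, Bool.false_or]
    rw [show (false : Bool) = ⊥ from rfl, Finset.sup_eq_bot_iff]
    intro j' hj'
    simp only [Finset.mem_filter, Finset.mem_univ, true_and] at hj'
    obtain ⟨i1, i2, h12, h1, h2⟩ := hdeg j'
    have : ∃ u : Fin n, u ≠ i ∧ H j' u = true := by
      by_cases h : i1 = i
      · exact ⟨i2, by intro he; exact h12 (h.trans he.symm), h2⟩
      · exact ⟨i1, h, h1⟩
    obtain ⟨u, hu, hHu⟩ := this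
    have hmem : u ∈ Finset.univ.filter fun u : Fin n => u ≠ i ∧ H j' u = true := by
      simp [hu, hHu]
    refine le_bot_iff.mp (le_trans (Finset.inf_le hmem) ?_)
    exact le_of_eq (ih u j')

lemma fin2_eq {x y z : Fin 2} (hx : x ≠ z) (hy : y ≠ z) : x = y := by omega

lemma key {c n : ℕ} (H : Fin c → Fin n → Bool)
    (π : Fin n → Fin 2) (hdeg : degTwo H) (L : ℕ)
    (w : Fin L → Fin n) (d : Fin L → Fin c)
    (hedge : ∀ t : Fin L, H (d t) (w t) = true)
    (hcond : ∀ t : Fin L, ∀ u : Fin n, u ≠ w t → H (d t) u = true →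
      π u ≠ π (w t) ∨ ∃ r : Fin L, r < t ∧ u = w r ∧ d r ≠ d t) :
    ∀ N, ∀ t : Fin L, (t : ℕ) < N → ∀ ℓ : ℕ, (t : ℕ) + 1 ≤ ℓ →
      ∀ a : Fin 2 → Bool, ∀ m' : Fin 2, m' ≠ π (w t) → a m' = true →
      CtoV H π ℓ (d t) (w t) a = true := by
  intro N
  induction N with
  | zero => intro t ht; omega
  | succ N ih =>
    intro t ht ℓ hℓ a m' hm' ha
    rw [CtoV, show (true : Bool) = ⊤ from rfl, Finset.inf_eq_top_iff]
    intro u hu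
    simp only [Finset.mem_filter, Finset.mem_univ, true_and] at hu
    obtain ⟨hune, hHu⟩ := hu
    by_cases hau : a (π u) = true
    · exact vtoc_of_true H π _ u (d t) a hau
    · rcases hcond t u hune hHu with hπ | ⟨r, hrt, rfl', hdr⟩
      · exact absurd (fin2_eq hπ hm' ▸ ha) hau
      · subst rfl'
        have hmr : m' ≠ π (w r) := fun h => hau (h ▸ ha)
        obtain ⟨ℓ', rfl⟩ : ∃ ℓ', ℓ = ℓ' + 2 := ⟨ℓ - 2, by omega⟩
        have hctov : CtoV H π (ℓ' + 1) (d r) (w r) a = true :=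
          ih r (by omega) (ℓ' + 1) (by omega) a m' hmr ha
        show VtoC H π (ℓ' + 1) (w r) (d t) a = true
        rw [VtoC, Bool.or_eq_true]
        right
        have hmem : d r ∈ Finset.univ.filter
            fun j' : Fin c => j' ≠ d t ∧ H j' (w r) = true := by
          simp [hdr, hedge r]
        refine le_antisymm le_top (le_trans ?_ (Finset.le_sup hmem))
        exact le_of_eq hctov.symm

/-- Generalized-rootcheck propagation (underlying Theorem 1): along a sequence of
VNs `w` and CNs `d` with `H (d t) (w t) = true`, where every other neighbor `u` of
`d t` either lies in the opposite block or has already been covered at an earlier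
index `r < t` via a different check, every `w t` attains (and retains) full
diversity from iteration `t + 1` on. -/
theorem gen_rootcheck_propagation {c n : ℕ} (H : Fin c → Fin n → Bool)
    (π : Fin n → Fin 2) (hdeg : degTwo H) (L : ℕ)
    (w : Fin L → Fin n) (d : Fin L → Fin c)
    (hedge : ∀ t : Fin L, H (d t) (w t) = true)
    (hcond : ∀ t : Fin L, ∀ u : Fin n, u ≠ w t → H (d t) u = true →
      π u ≠ π (w t) ∨ ∃ r : Fin L, r < t ∧ u = w r ∧ d r ≠ d t) :
    ∀ t : Fin L, ∀ ℓ : ℕ, (t : ℕ) + 1 ≤ ℓ → apost H π ℓ (w t) = FD := by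
  intro t ℓ hℓ
  funext a
  by_cases h0 : a 0 = false
  · by_cases h1 : a 1 = false
    · have ha : ∀ m : Fin 2, a m = false := by
        intro m
        have : m = 0 ∨ m = 1 := by omega
        rcases this with rfl | rfl <;> assumption
      have hFD : FD a = false := by simp [FD, h0, h1]
      rw [hFD, apost, ha, Bool.false_or,
        show (false : Bool) = ⊥ from rfl, Finset.sup_eq_bot_iff]
      intro j hj
      simp only [Finset.mem_filter, Finset.mem_univ, true_and] at hj
      obtain ⟨i1, i2, h12, hH1, hH2⟩ := hdeg j
      have : ∃ u : Fin n, u ≠ w t ∧ H j u = true := by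
        by_cases h : i1 = w t
        · exact ⟨i2, fun he => h12 (h.trans he.symm), hH2⟩
        · exact ⟨i1, h, hH1⟩
      obtain ⟨u, hu, hHu⟩ := this
      have hmem : u ∈ Finset.univ.filter fun u : Fin n => u ≠ w t ∧ H j u = true := by
        simp [hu, hHu]
      refine le_bot_iff.mp (le_trans (Finset.inf_le hmem) ?_)
      exact le_of_eq (vtoc_false H π hdeg a ha (ℓ - 1) u j)
    · -- a 1 = true
      have h1 : a 1 = true := by simpa using h1
      have hFD : FD a = true := by simp [FD, h1]
      rw [hFD, apost, Bool.or_eq_true]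
      by_cases hat : a (π (w t)) = true
      · left; exact hat
      · right
        have hm' : (1 : Fin 2) ≠ π (w t) := fun h => hat (h ▸ h1)
        have hctov := key H π hdeg L w d hedge hcond ((t : ℕ) + 1) t (by omega) ℓ hℓ a 1 hm' h1
        have hmem : d t ∈ Finset.univ.filter fun j : Fin c => H j (w t) = true := by
          simp [hedge t]
        exact le_antisymm le_top (le_trans (le_of_eq hctov.symm) (Finset.le_sup (f := fun j => CtoV H π ℓ j (w t) a) hmem))
  · have h0 : a 0 = true := by simpa using h0
    have hFD : FD a = true := by simp [FD, h0]
    rw [hFD, apost, Bool.or_eq_true]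
    by_cases hat : a (π (w t)) = true
    · left; exact hat
    · right
      have hm' : (0 : Fin 2) ≠ π (w t) := fun h => hat (h ▸ h0)
      have hctov := key H π hdeg L w d hedge hcond ((t : ℕ) + 1) t (by omega) ℓ hℓ a 0 hm' h0
      have hmem : d t ∈ Finset.univ.filter fun j : Fin c => H j (w t) = true := by
        simp [hedge t]
      exact le_antisymm le_top (le_trans (le_of_eq hctov.symm) (Finset.le_sup (f := fun j => CtoV H π ℓ j (w t) a) hmem))
end DivE
end

section
/- In the DivE framework (arbitrary M ≥ 1), the DivE iteration stabilizes in finitely many steps: there exists an iteration L such that for every ℓ ≥ L, every VN i, every CN j, and every fading state a, F^ℓ_{v i → c j}(a) = F^L_{v i → c j}(a), F^ℓ_{c j → v i}(a) = F^L_{c j → v i}(a), and F^ℓ_i(a) = F^L_i(a). Consequently, the final Boolean fading function F_i := lim_{ℓ→∞} F^ℓ_i of every VN is well defined (the sequence is eventually constant). (This justifies the fixed-point definition of the final Boolean fading function in Definition 2 of the paper.) -/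
namespace DivE

lemma vtoc_mono {M c n : ℕ} (H : Fin c → Fin n → Bool) (π : Fin n → Fin M) :
    ∀ ℓ : ℕ, ∀ i j a, VtoC H π ℓ i j a ≤ VtoC H π (ℓ + 1) i j a := by
  intro ℓ
  induction ℓ with
  | zero =>
    intro i j a
    simp only [VtoC]
    cases a (π i) <;> simp
  | succ ℓ ih =>
    intro i j a
    simp only [VtoC]
    cases a (π i) <;> simp only [Bool.true_or, Bool.false_or, le_refl]
    exact Finset.sup_mono_fun fun j' _ => Finset.inf_mono_fun fun u _ => ih u j' a

lemma vtoc_mono' {M c n : ℕ} (H : Fin c → Fin n → Bool) (π : Fin n → Fin M) :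
    ∀ k k' : ℕ, k ≤ k' → ∀ i j a, VtoC H π k i j a ≤ VtoC H π k' i j a := by
  intro k k' h
  induction h with
  | refl => intro i j a; exact le_refl _
  | step h ih => intro i j a; exact le_trans (ih i j a) (vtoc_mono H π _ i j a)

lemma vtoc_step {M c n : ℕ} (H : Fin c → Fin n → Bool) (π : Fin n → Fin M) (ℓ : ℕ)
    (h : ∀ i j a, VtoC H π ℓ i j a = VtoC H π (ℓ + 1) i j a) :
    ∀ i j a, VtoC H π (ℓ + 1) i j a = VtoC H π (ℓ + 2) i j a := by
  intro i j a
  show VtoC H π (ℓ + 1) i j a = VtoC H π (ℓ + 1 + 1) i j a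
  simp only [VtoC]
  congr 1
  refine Finset.sup_congr rfl fun j' _ => Finset.inf_congr rfl fun u _ => h u j' a

lemma vtoc_stab {M c n : ℕ} (H : Fin c → Fin n → Bool) (π : Fin n → Fin M) :
    ∃ L0 : ℕ, ∀ k : ℕ, L0 ≤ k → ∀ i j a, VtoC H π k i j a = VtoC H π L0 i j a := by
  obtain ⟨x, y, hxy, hfeq⟩ := Finite.exists_ne_map_eq_of_infinite
    (fun ℓ : ℕ => (fun i j a => VtoC H π ℓ i j a : Fin n → Fin c → (Fin M → Bool) → Bool))
  wlog hlt : x < y generalizing x y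
  · exact this y x hxy.symm hfeq.symm (lt_of_le_of_ne (not_lt.mp hlt) hxy.symm)
  refine ⟨x, ?_⟩
  have hfix : ∀ i j a, VtoC H π x i j a = VtoC H π (x + 1) i j a := by
    intro i j a
    refine le_antisymm (vtoc_mono H π x i j a) ?_
    have h1 : VtoC H π (x + 1) i j a ≤ VtoC H π y i j a := vtoc_mono' H π _ _ hlt i j a
    have h2 : VtoC H π y i j a = VtoC H π x i j a := by
      have := congrFun (congrFun (congrFun hfeq.symm i) j) a
      exact this
    exact h2 ▸ h1
  intro k hk
  induction k with
  | zero =>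
    intro i j a
    cases Nat.le_zero.mp hk
    rfl
  | succ k ihk =>
    rcases Nat.lt_or_ge x (k + 1) with h | h
    · have hxk : x ≤ k := Nat.lt_succ_iff.mp h
      have hall : ∀ m, x ≤ m → ∀ i j a, VtoC H π m i j a = VtoC H π (m + 1) i j a := by
        intro m hm
        induction hm with
        | refl => exact hfix
        | step _ ih2 => exact vtoc_step H π _ ih2
      intro i j a
      rw [← hall k hxk i j a]
      exact ihk hxk i j a
    · intro i j a
      cases Nat.le_antisymm hk h
      rfl

/-- The DivE iteration stabilizes in finitely many steps, so the final Boolean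
fading function of every VN is well defined. -/
theorem dive_stabilizes {M c n : ℕ} (hM : 1 ≤ M) (H : Fin c → Fin n → Bool)
    (π : Fin n → Fin M) :
    ∃ L : ℕ, ∀ ℓ : ℕ, L ≤ ℓ →
      (∀ i : Fin n, ∀ j : Fin c, ∀ a : Fin M → Bool,
          VtoC H π ℓ i j a = VtoC H π L i j a) ∧
      (∀ j : Fin c, ∀ i : Fin n, ∀ a : Fin M → Bool,
          CtoV H π ℓ j i a = CtoV H π L j i a) ∧
      (∀ i : Fin n, ∀ a : Fin M → Bool, apost H π ℓ i a = apost H π L i a) := by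
  obtain ⟨L0, hL0⟩ := vtoc_stab H π
  refine ⟨L0 + 1, fun ℓ hℓ => ?_⟩
  have hV : ∀ i j a, VtoC H π ℓ i j a = VtoC H π (L0 + 1) i j a := by
    intro i j a
    rw [hL0 ℓ (le_trans (Nat.le_succ L0) hℓ) i j a, hL0 (L0 + 1) (Nat.le_succ L0) i j a]
  have hC : ∀ j i a, CtoV H π ℓ j i a = CtoV H π (L0 + 1) j i a := by
    intro j i a
    unfold CtoV
    refine Finset.inf_congr rfl fun u _ => ?_
    have h1 : L0 ≤ ℓ - 1 := Nat.le_sub_one_of_lt hℓ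
    rw [hL0 (ℓ - 1) h1 u j a]
    simp [hL0]
  exact ⟨hV, hC, fun i a => by
    unfold apost
    congr 1
    exact Finset.sup_congr rfl fun j _ => hC j i a⟩
end DivE
end

section
/- In the DivE framework (arbitrary M ≥ 1), assume every CN has degree at least 2. Then at the all-fading state a₀ (the fading state with a₀ m = false for every m : Fin M), all DivE messages vanish for every iteration: F^ℓ_{v i → c j}(a₀) = false for all ℓ ≥ 0, F^ℓ_{c j → v i}(a₀) = false for all ℓ ≥ 1, and F^ℓ_i(a₀) = false for all ℓ ≥ 1, for every VN i and CN j. (This is the key structural fact ensuring that no VN can spuriously exceed full diversity when all blocks fade.) -/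
namespace DivE

/-- At the all-fading state all DivE messages vanish at every iteration,
provided every CN has degree at least 2. -/
theorem dive_all_fading_vanishes {M c n : ℕ} (hM : 1 ≤ M) (H : Fin c → Fin n → Bool)
    (π : Fin n → Fin M) (hdeg : degTwo H) :
    (∀ ℓ : ℕ, ∀ i : Fin n, ∀ j : Fin c,
        VtoC H π ℓ i j (fun _ => false) = false) ∧
    (∀ ℓ : ℕ, 1 ≤ ℓ → ∀ j : Fin c, ∀ i : Fin n,
        CtoV H π ℓ j i (fun _ => false) = false) ∧
    (∀ ℓ : ℕ, 1 ≤ ℓ → ∀ i : Fin n,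
        apost H π ℓ i (fun _ => false) = false) := by
  have key : ∀ ℓ : ℕ, ∀ i : Fin n, ∀ j : Fin c,
      VtoC H π ℓ i j (fun _ => false) = false := by
    intro ℓ
    induction ℓ with
    | zero => intro i j; simp [VtoC]
    | succ ℓ ih =>
      intro i j
      simp only [VtoC, Bool.false_or]
      show _ = (⊥ : Bool)
      rw [Finset.sup_eq_bot_iff]
      intro j' hj'
      simp only [Finset.mem_filter] at hj'
      obtain ⟨i₁, i₂, h12, h1, h2⟩ := hdeg j'
      have : ∃ u : Fin n, u ≠ i ∧ H j' u = true := by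
        by_cases h : i₁ = i
        · exact ⟨i₂, by simpa [h] using h12.symm, h2⟩
        · exact ⟨i₁, h, h1⟩
      obtain ⟨u, hu, hHu⟩ := this
      have hle := Finset.inf_le (f := fun u => VtoC H π ℓ u j' (fun _ => false))
        (show u ∈ Finset.univ.filter fun u : Fin n => u ≠ i ∧ H j' u = true by
          simp [hu, hHu])
      simp only [ih u j'] at hle
      exact le_antisymm hle bot_le
  have keyC : ∀ ℓ : ℕ, 1 ≤ ℓ → ∀ j : Fin c, ∀ i : Fin n,
      CtoV H π ℓ j i (fun _ => false) = false := by
    intro ℓ _ j i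
    unfold CtoV
    obtain ⟨i₁, i₂, h12, h1, h2⟩ := hdeg j
    have : ∃ u : Fin n, u ≠ i ∧ H j u = true := by
      by_cases h : i₁ = i
      · exact ⟨i₂, by simpa [h] using h12.symm, h2⟩
      · exact ⟨i₁, h, h1⟩
    obtain ⟨u, hu, hHu⟩ := this
    have hle := Finset.inf_le (f := fun u => VtoC H π (ℓ - 1) u j (fun _ => false))
      (show u ∈ Finset.univ.filter fun u : Fin n => u ≠ i ∧ H j u = true by
        simp [hu, hHu])
    simp only [key (ℓ - 1) u j] at hle
    exact le_antisymm hle bot_le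
  refine ⟨key, keyC, ?_⟩
  intro ℓ hℓ i
  simp only [apost, Bool.false_or]
  show _ = (⊥ : Bool)
  rw [Finset.sup_eq_bot_iff]
  intro j _
  exact keyC ℓ hℓ j i
end DivE
end
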